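/- arXiv:1708.09081 — 6 statements merged into one kernel-verified Lean document; each statement's English description precedes it below -/
import Mathlib

section
/- (Stationary distribution of random walk with jumps.) Let α > 0 and n ≥ 1. The probability vector π with π_i = (d_i + α)/(2|E| + nα) is stationary for the RWwJ transition matrix P: for every j ∈ U, ∑_{i∈U} π_i P_{ij} = π_j. In particular, in steady state a node u is sampled with probability proportional to d_u + α. -/
open Finset

/-!
RWwJ is the random walk on the complete graph with symmetric edge weights
`K i j = [i ~ j] + α / n`, whose row sums are `d_i + α`. A walk that moves along a symmetric
kernel with probabilities proportional to the weights is reversible with respect to the row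
sums, so these row sums, scaled by any constant, form a stationary vector; the constant
`2|E| + nα` only makes `π` a probability vector.
-/

theorem sum_div_mul_div_eq_of_symm {ι : Type*} [Fintype ι] (K : ι → ι → ℝ)
    (hK : ∀ i j, K i j = K j i) (w : ι → ℝ) (hw : ∀ i, w i ≠ 0)
    (hw_sum : ∀ i, ∑ j, K i j = w i) (Z : ℝ) (j : ι) :
    ∑ i, w i / Z * (K i j / w i) = w j / Z := by
  calc ∑ i, w i / Z * (K i j / w i)
      = ∑ i, K j i / Z := by
        refine sum_congr rfl fun i _ => ?_
        rw [hK]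
        field_simp [hw i]
    _ = w j / Z := by rw [← sum_div, hw_sum]

theorem SimpleGraph.sum_adj_indicator_add_div_card {U : Type*} [Fintype U]
    (G : SimpleGraph U) [DecidableRel G.Adj] [Nonempty U] (α : ℝ) (j : U) :
    ∑ i, ((if G.Adj j i then 1 else 0) + α / Fintype.card U) = (G.degree j : ℝ) + α := by
  have hn : (Fintype.card U : ℝ) ≠ 0 := by positivity
  rw [sum_add_distrib, sum_boole, sum_const, card_univ, nsmul_eq_mul, mul_div_cancel₀ _ hn,
    ← G.neighborFinset_eq_filter, G.card_neighborFinset_eq_degree]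

theorem rwwj_stationary_general
    {U : Type*} [Fintype U]
    (G : SimpleGraph U) [DecidableRel G.Adj]
    (α : ℝ) (hα : 0 < α)
    (P : U → U → ℝ)
    (hP : ∀ i j, P i j =
      if G.Adj i j then (α / (Fintype.card U : ℝ) + 1) / ((G.degree i : ℝ) + α)
      else (α / (Fintype.card U : ℝ)) / ((G.degree i : ℝ) + α))
    (pi : U → ℝ)
    (hpi : ∀ i, pi i = ((G.degree i : ℝ) + α)
        / (2 * (G.edgeFinset.card : ℝ) + (Fintype.card U : ℝ) * α)) :
    ∀ j : U, ∑ i : U, pi i * P i j = pi j := by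
  intro j
  have : Nonempty U := ⟨j⟩
  set K : U → U → ℝ := fun i j => (if G.Adj i j then 1 else 0) + α / Fintype.card U
  have hPK : ∀ i j, P i j = K i j / ((G.degree i : ℝ) + α) := by
    intro i j
    by_cases h : G.Adj i j <;> simp only [hP, K, h, if_true, if_false] <;> ring
  simp only [hpi, hPK]
  exact sum_div_mul_div_eq_of_symm K (fun i j => by simp only [K, G.adj_comm])
    _ (fun i => by positivity) (G.sum_adj_indicator_add_div_card α) _ j

/-- Stationary distribution of the random walk with jumps:
the probability vector `π i = (d i + α) / (2|E| + n α)` is stationary for the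
RWwJ transition matrix `P`, i.e. `∑ i, π i * P i j = π j` for every `j`. -/
theorem rwwj_stationary
    {U : Type*} [Fintype U] [DecidableEq U]
    (G : SimpleGraph U) [DecidableRel G.Adj]
    (α : ℝ) (hα : 0 < α) (hn : 1 ≤ Fintype.card U)
    (P : U → U → ℝ)
    (hP : ∀ i j, P i j =
      if G.Adj i j then (α / (Fintype.card U : ℝ) + 1) / ((G.degree i : ℝ) + α)
      else (α / (Fintype.card U : ℝ)) / ((G.degree i : ℝ) + α))
    (pi : U → ℝ)
    (hpi : ∀ i, pi i = ((G.degree i : ℝ) + α)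
        / (2 * (G.edgeFinset.card : ℝ) + (Fintype.card U : ℝ) * α)) :
    ∀ j : U, ∑ i : U, pi i * P i j = pi j :=
  rwwj_stationary_general G α hα P hP pi hpi
end

section
/- (Stationarity of the RWT-VSA chain.) Under the hypotheses of the weight assignment w_u = α b_u with α > 0, B := ∑_{u∈U} b_u > 0, d_v^{(b)} ≥ 1 for all v ∈ V, and d_u + w_u > 0 for all u ∈ U, the probability vector π on U ∪ {j} given by π_u = (d_u + w_u)/Z for u ∈ U and π_j = αB/Z, where Z = 2|E| + 2αB, is stationary for the RWT-VSA transition kernel P: for every state y ∈ U ∪ {j}, ∑_{x ∈ U∪{j}} π_x P(x,y) = π_y. -/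
/-!
The unnormalised measure `μ u = d_u + w_u`, `μ j = α B` is already invariant: the mass flowing
from `u` along each of its edges is `μ u / (d_u + w_u) = 1`, so a vertex `v` receives `d_v` from its
neighbours and `α B · b_v / B = w_v` from the jumper, while the jumper receives `∑ w_u = α B`.
Dividing by `Z` leaves the balance equations unchanged.
-/

open Finset

theorem SimpleGraph.sum_mul_ite_adj_one_div_self {U : Type*} [Fintype U] (G : SimpleGraph U)
    [DecidableRel G.Adj] (f : U → ℝ) (hf : ∀ u, f u ≠ 0) (v : U) :
    ∑ u, f u * (if G.Adj u v then 1 / f u else 0) = G.degree v := by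
  have hterm : ∀ u, f u * (if G.Adj u v then 1 / f u else 0) = if G.Adj v u then 1 else 0 := by
    intro u
    simp only [G.adj_comm u v]
    split_ifs
    · exact mul_one_div_cancel (hf u)
    · exact mul_zero _
  simp only [hterm, sum_boole, ← G.neighborFinset_eq_filter, G.card_neighborFinset_eq_degree]

namespace RWTVSA

variable {U : Type*} [Fintype U] (G : SimpleGraph U) [DecidableRel G.Adj]

/-- The jumper `j` is `none`, carrying mass `m`. -/
def weight (w : U → ℝ) (m : ℝ) : Option U → ℝ
  | some u => G.degree u + w u
  | none => m

variable {G} {w : U → ℝ} (m : ℝ) {P : Option U → Option U → ℝ}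

theorem sum_weight_mul_to_jumper (hdw : ∀ u, (G.degree u : ℝ) + w u ≠ 0)
    (hP2 : ∀ u : U, P (some u) none = w u / ((G.degree u : ℝ) + w u))
    (hP4 : P none none = 0) :
    ∑ x, weight G w m x * P x none = ∑ u, w u := by
  rw [Fintype.sum_option]
  simp only [weight, hP4, hP2, mul_zero, zero_add, mul_div_cancel₀ _ (hdw _)]

theorem sum_weight_mul_to_vertex {b : U → ℝ} {B : ℝ}
    (hdw : ∀ u, (G.degree u : ℝ) + w u ≠ 0)
    (hP1 : ∀ u u' : U, P (some u) (some u') =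
      if G.Adj u u' then 1 / ((G.degree u : ℝ) + w u) else 0)
    (hP3 : ∀ u : U, P none (some u) = b u / B) (v : U) :
    ∑ x, weight G w m x * P x (some v) = G.degree v + m * (b v / B) := by
  rw [Fintype.sum_option, add_comm]
  simp only [weight, hP1, hP3]
  rw [G.sum_mul_ite_adj_one_div_self _ hdw]

end RWTVSA

theorem rwtvsa_stationary_general
    {U : Type*} [Fintype U]
    (G : SimpleGraph U) [DecidableRel G.Adj]
    (b : U → ℝ)
    (α : ℝ)
    (w : U → ℝ) (hw : ∀ u, w u = α * b u)
    (B : ℝ) (hB : B = ∑ u : U, b u) (hBpos : 0 < B)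
    (hdw : ∀ u, 0 < (G.degree u : ℝ) + w u)
    (P : Option U → Option U → ℝ)
    (hP1 : ∀ u u' : U, P (some u) (some u') =
      if G.Adj u u' then 1 / ((G.degree u : ℝ) + w u) else 0)
    (hP2 : ∀ u : U, P (some u) none = w u / ((G.degree u : ℝ) + w u))
    (hP3 : ∀ u : U, P none (some u) = b u / B)
    (hP4 : P none none = 0)
    (Z : ℝ)
    (pi : Option U → ℝ)
    (hpi1 : ∀ u : U, pi (some u) = ((G.degree u : ℝ) + w u) / Z)
    (hpi2 : pi none = α * B / Z) :
    ∀ y : Option U, ∑ x : Option U, pi x * P x y = pi y := by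
  have hdw' : ∀ u, (G.degree u : ℝ) + w u ≠ 0 := fun u => (hdw u).ne'
  have hpi : pi = fun x => RWTVSA.weight G w (α * B) x / Z := by
    funext x
    cases x <;> simp only [RWTVSA.weight, hpi1, hpi2]
  suffices ∀ y, ∑ x, RWTVSA.weight G w (α * B) x * P x y = RWTVSA.weight G w (α * B) y by
    intro y
    simp only [hpi, div_mul_eq_mul_div, ← sum_div, this]
  rintro (_ | v)
  · rw [RWTVSA.sum_weight_mul_to_jumper _ hdw' hP2 hP4, RWTVSA.weight, hB, mul_sum]
    exact sum_congr rfl fun u _ => hw u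
  · rw [RWTVSA.sum_weight_mul_to_vertex _ hdw' hP1 hP3, RWTVSA.weight, hw,
      mul_assoc, mul_div_cancel₀ _ hBpos.ne']

/-- Stationarity of the RWT-VSA chain: with weights
`w u = α * b u`, the probability vector `π` on `U ∪ {j}` (encoded as `Option U`,
with the jumper node `j` encoded by `none`) given by `π u = (d u + w u)/Z`,
`π j = α B / Z`, `Z = 2|E| + 2 α B`, is stationary for the RWT-VSA transition
kernel `P`: for every state `y`, `∑ x, π x * P x y = π y`. -/
theorem rwtvsa_stationary
    {U V : Type*} [Fintype U] [Fintype V] [DecidableEq U]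
    (G : SimpleGraph U) [DecidableRel G.Adj]
    (R : U → V → Prop) [∀ u v, Decidable (R u v)]
    (a : V → ℝ) (ha : ∀ v, 0 < a v)
    (dVb : V → ℕ) (hdVb : ∀ v, dVb v = (Finset.univ.filter (fun u => R u v)).card)
    (hdeg : ∀ v, 1 ≤ dVb v)
    (b : U → ℝ)
    (hb : ∀ u, b u = ∑ v ∈ Finset.univ.filter (fun v => R u v), a v / (dVb v : ℝ))
    (α : ℝ) (hα : 0 < α)
    (w : U → ℝ) (hw : ∀ u, w u = α * b u)
    (B : ℝ) (hB : B = ∑ u : U, b u) (hBpos : 0 < B)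
    (hdw : ∀ u, 0 < (G.degree u : ℝ) + w u)
    (P : Option U → Option U → ℝ)
    (hP1 : ∀ u u' : U, P (some u) (some u') =
      if G.Adj u u' then 1 / ((G.degree u : ℝ) + w u) else 0)
    (hP2 : ∀ u : U, P (some u) none = w u / ((G.degree u : ℝ) + w u))
    (hP3 : ∀ u : U, P none (some u) = b u / B)
    (hP4 : P none none = 0)
    (Z : ℝ) (hZ : Z = 2 * (G.edgeFinset.card : ℝ) + 2 * α * B)
    (pi : Option U → ℝ)
    (hpi1 : ∀ u : U, pi (some u) = ((G.degree u : ℝ) + w u) / Z)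
    (hpi2 : pi none = α * B / Z) :
    ∀ y : Option U, ∑ x : Option U, pi x * P x y = pi y :=
  rwtvsa_stationary_general G b α w hw B hB hBpos hdw P hP1 hP2 hP3 hP4 Z pi hpi1 hpi2
end

section
/- (Closed form for the target-graph jump weights in RWT-RWA.) Let α, β > 0, c = α/(2m' + β) and c' = β/(2m + α). Suppose the vectors w_U ∈ ℝ^U, w_V ∈ ℝ^V, π_U ∈ ℝ^U, π_V ∈ ℝ^V satisfy the system w_U = α A D_V^{-1} π_V, w_V = β Aᵀ D_U^{-1} π_U, π_U = (d_U + w_U)/(2m + α), and π_V = (d_V + w_V)/(2m' + β). If the matrix M = I − c c' A D_V^{-1} Aᵀ D_U^{-1} is invertible, then w_U = c · M^{-1} A D_V^{-1} (d_V + c' Aᵀ D_U^{-1} d_U). -/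
open Finset Matrix

/-- Closed form for the target-graph jump weights in RWT-RWA:
if `w_U, w_V, π_U, π_V` satisfy the RWT-RWA fixed-point system and
`M = I - c c' A D_V⁻¹ Aᵀ D_U⁻¹` is invertible, then
`w_U = c • M⁻¹ A D_V⁻¹ (d_V + c' Aᵀ D_U⁻¹ d_U)`. -/
theorem rwtrwa_weights_closed_form_U
    {U V : Type*} [Fintype U] [Fintype V] [DecidableEq U] [DecidableEq V]
    [Nonempty U] [Nonempty V]
    (G : SimpleGraph U) [DecidableRel G.Adj]
    (G' : SimpleGraph V) [DecidableRel G'.Adj]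
    (A : Matrix U V ℝ) (hA : ∀ u v, A u v = 0 ∨ A u v = 1)
    (dUb : U → ℝ) (hdUb : ∀ u, dUb u = ∑ v : V, A u v) (hdUbpos : ∀ u, 0 < dUb u)
    (dVb : V → ℝ) (hdVb : ∀ v, dVb v = ∑ u : U, A u v) (hdVbpos : ∀ v, 0 < dVb v)
    (DU : Matrix U U ℝ) (hDU : DU = Matrix.diagonal dUb)
    (DV : Matrix V V ℝ) (hDV : DV = Matrix.diagonal dVb)
    (dU : U → ℝ) (hdU : ∀ u, dU u = (G.degree u : ℝ))
    (dV : V → ℝ) (hdV : ∀ v, dV v = (G'.degree v : ℝ))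
    (m m' : ℝ) (hm : m = (G.edgeFinset.card : ℝ)) (hm' : m' = (G'.edgeFinset.card : ℝ))
    (α β : ℝ) (hα : 0 < α) (hβ : 0 < β)
    (c c' : ℝ) (hc : c = α / (2 * m' + β)) (hc' : c' = β / (2 * m + α))
    (wU πU : U → ℝ) (wV πV : V → ℝ)
    (h1 : wU = α • (A * DV⁻¹).mulVec πV)
    (h2 : wV = β • (Aᵀ * DU⁻¹).mulVec πU)
    (h3 : πU = (2 * m + α)⁻¹ • (dU + wU))
    (h4 : πV = (2 * m' + β)⁻¹ • (dV + wV))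
    (M : Matrix U U ℝ) (hM : M = 1 - (c * c') • (A * DV⁻¹ * Aᵀ * DU⁻¹))
    (hMinv : IsUnit M.det) :
    wU = c • (M⁻¹ * A * DV⁻¹).mulVec (dV + c' • (Aᵀ * DU⁻¹).mulVec dU) := by
  have hm0 : (0:ℝ) ≤ m := by rw [hm]; positivity
  have hm'0 : (0:ℝ) ≤ m' := by rw [hm']; positivity
  have hd1 : (2 * m' + β) ≠ 0 := by nlinarith
  have hd2 : (2 * m + α) ≠ 0 := by nlinarith
  have hwU : wU = c • (A * DV⁻¹).mulVec (dV + wV) := by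
    rw [h1, h4, Matrix.mulVec_smul, smul_smul, hc, div_eq_mul_inv]
  have hwV : wV = c' • (Aᵀ * DU⁻¹).mulVec (dU + wU) := by
    rw [h2, h3, Matrix.mulVec_smul, smul_smul, hc', div_eq_mul_inv]
  have hkey : M.mulVec wU = c • (A * DV⁻¹).mulVec (dV + c' • (Aᵀ * DU⁻¹).mulVec dU) := by
    have hP : (A * DV⁻¹ * Aᵀ * DU⁻¹).mulVec wU
        = (A * DV⁻¹).mulVec ((Aᵀ * DU⁻¹).mulVec wU) := by
      rw [Matrix.mulVec_mulVec, Matrix.mul_assoc]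
    have hexp : wU = c • (A * DV⁻¹).mulVec dV
        + (c * c') • (A * DV⁻¹).mulVec ((Aᵀ * DU⁻¹).mulVec dU)
        + (c * c') • (A * DV⁻¹).mulVec ((Aᵀ * DU⁻¹).mulVec wU) := by
      conv_lhs => rw [hwU, hwV]
      simp only [Matrix.mulVec_add, Matrix.mulVec_smul, smul_add, smul_smul]
      module
    rw [hM, Matrix.sub_mulVec, Matrix.one_mulVec, Matrix.smul_mulVec, hP]
    nth_rewrite 1 [hexp]
    simp only [Matrix.mulVec_add, Matrix.mulVec_smul, smul_add, smul_smul]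
    module
  have hMM : M⁻¹.mulVec (M.mulVec wU) = wU := by
    rw [Matrix.mulVec_mulVec, Matrix.nonsing_inv_mul M hMinv, Matrix.one_mulVec]
  calc wU = M⁻¹.mulVec (M.mulVec wU) := hMM.symm
    _ = c • (M⁻¹ * A * DV⁻¹).mulVec (dV + c' • (Aᵀ * DU⁻¹).mulVec dU) := by
        rw [hkey, Matrix.mulVec_smul, Matrix.mulVec_mulVec, ← Matrix.mul_assoc]
end

section
/- (Closed form for the auxiliary-graph jump weights in RWT-RWA.) Let α, β > 0, c = α/(2m' + β) and c' = β/(2m + α). Suppose the vectors w_U ∈ ℝ^U, w_V ∈ ℝ^V, π_U ∈ ℝ^U, π_V ∈ ℝ^V satisfy the system w_U = α A D_V^{-1} π_V, w_V = β Aᵀ D_U^{-1} π_U, π_U = (d_U + w_U)/(2m + α), and π_V = (d_V + w_V)/(2m' + β). If the matrix M' = I − c c' Aᵀ D_U^{-1} A D_V^{-1} is invertible, then w_V = c' · M'^{-1} Aᵀ D_U^{-1} (d_U + c A D_V^{-1} d_V). -/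
open Finset Matrix

/-- Closed form for the auxiliary-graph jump weights in
RWT-RWA: if `w_U, w_V, π_U, π_V` satisfy the RWT-RWA fixed-point system and
`M' = I - c c' Aᵀ D_U⁻¹ A D_V⁻¹` is invertible, then
`w_V = c' • M'⁻¹ Aᵀ D_U⁻¹ (d_U + c A D_V⁻¹ d_V)`. -/
theorem rwtrwa_weights_closed_form_V
    {U V : Type*} [Fintype U] [Fintype V] [DecidableEq U] [DecidableEq V]
    [Nonempty U] [Nonempty V]
    (G : SimpleGraph U) [DecidableRel G.Adj]
    (G' : SimpleGraph V) [DecidableRel G'.Adj]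
    (A : Matrix U V ℝ) (hA : ∀ u v, A u v = 0 ∨ A u v = 1)
    (dUb : U → ℝ) (hdUb : ∀ u, dUb u = ∑ v : V, A u v) (hdUbpos : ∀ u, 0 < dUb u)
    (dVb : V → ℝ) (hdVb : ∀ v, dVb v = ∑ u : U, A u v) (hdVbpos : ∀ v, 0 < dVb v)
    (DU : Matrix U U ℝ) (hDU : DU = Matrix.diagonal dUb)
    (DV : Matrix V V ℝ) (hDV : DV = Matrix.diagonal dVb)
    (dU : U → ℝ) (hdU : ∀ u, dU u = (G.degree u : ℝ))
    (dV : V → ℝ) (hdV : ∀ v, dV v = (G'.degree v : ℝ))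
    (m m' : ℝ) (hm : m = (G.edgeFinset.card : ℝ)) (hm' : m' = (G'.edgeFinset.card : ℝ))
    (α β : ℝ) (hα : 0 < α) (hβ : 0 < β)
    (c c' : ℝ) (hc : c = α / (2 * m' + β)) (hc' : c' = β / (2 * m + α))
    (wU πU : U → ℝ) (wV πV : V → ℝ)
    (h1 : wU = α • (A * DV⁻¹).mulVec πV)
    (h2 : wV = β • (Aᵀ * DU⁻¹).mulVec πU)
    (h3 : πU = (2 * m + α)⁻¹ • (dU + wU))
    (h4 : πV = (2 * m' + β)⁻¹ • (dV + wV))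
    (M' : Matrix V V ℝ) (hM' : M' = 1 - (c * c') • (Aᵀ * DU⁻¹ * A * DV⁻¹))
    (hMinv : IsUnit M'.det) :
    wV = c' • (M'⁻¹ * Aᵀ * DU⁻¹).mulVec (dU + c • (A * DV⁻¹).mulVec dV) := by
  have hwV : wV = c' • (Aᵀ * DU⁻¹).mulVec (dU + wU) := by
    rw [h2, h3, Matrix.mulVec_smul, smul_smul, hc', div_eq_mul_inv]
  have hwU : wU = c • (A * DV⁻¹).mulVec (dV + wV) := by
    rw [h1, h4, Matrix.mulVec_smul, smul_smul, hc, div_eq_mul_inv]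
  have key : M'.mulVec wV
      = c' • (Aᵀ * DU⁻¹).mulVec (dU + c • (A * DV⁻¹).mulVec dV) := by
    rw [hM', Matrix.sub_mulVec, Matrix.one_mulVec, Matrix.smul_mulVec]
    have hB : (Aᵀ * DU⁻¹ * A * DV⁻¹).mulVec wV
        = (Aᵀ * DU⁻¹).mulVec ((A * DV⁻¹).mulVec wV) := by
      rw [Matrix.mulVec_mulVec, Matrix.mul_assoc]
    rw [hB]
    have e : wV = c' • (Aᵀ * DU⁻¹).mulVec dU
        + (c' * c) • (Aᵀ * DU⁻¹).mulVec ((A * DV⁻¹).mulVec dV)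
        + (c' * c) • (Aᵀ * DU⁻¹).mulVec ((A * DV⁻¹).mulVec wV) := by
      conv_lhs => rw [hwV, hwU]
      simp only [Matrix.mulVec_add, Matrix.mulVec_smul, smul_add, smul_smul]
      module
    nth_rewrite 1 [e]
    simp only [Matrix.mulVec_add, Matrix.mulVec_smul, smul_add, smul_smul]
    module
  have hfinal := congrArg (fun x => M'⁻¹.mulVec x) key
  simp only [Matrix.mulVec_mulVec] at hfinal
  rw [Matrix.nonsing_inv_mul _ hMinv, Matrix.one_mulVec] at hfinal
  rw [hfinal, Matrix.mulVec_smul, Matrix.mulVec_mulVec, Matrix.mul_assoc]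
end

section
/- (Normalization of the RWT-RWA weights and stationary vectors.) Let G = (U, E) and G' = (V, E') be finite simple undirected graphs with m = |E| ≥ 1 and m' = |E'| ≥ 1, let G_b be a bipartite graph between U and V in which every u ∈ U and every v ∈ V has at least one bipartite neighbor, and let α, β > 0. Suppose real-valued functions w on U ∪ V and π on U ∪ V satisfy, for all u ∈ U and v ∈ V: w_u = α ∑_{v∈V_u} π_v / d_v^{(b)}, w_v = β ∑_{u∈U_v} π_u / d_u^{(b)}, π_u = (d_u + w_u)/(2m + α), and π_v = (d_v + w_v)/(2m' + β). Then ∑_{u∈U} w_u = α and ∑_{v∈V} w_v = β; consequently ∑_{u∈U} π_u = 1 and ∑_{v∈V} π_v = 1, i.e., π_U and π_V are probability distributions on U and V. -/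
open Finset

/-- Normalization of the RWT-RWA weights and stationary
vectors: if `w` and `π` (given on `U` and `V` separately) satisfy the RWT-RWA
fixed-point system, then `∑_{u∈U} w u = α`, `∑_{v∈V} w v = β`, and consequently
`π_U` and `π_V` are probability distributions on `U` and `V`. -/
theorem rwtrwa_weights_normalization
    {U V : Type*} [Fintype U] [Fintype V] [DecidableEq U] [DecidableEq V]
    (G : SimpleGraph U) [DecidableRel G.Adj]
    (G' : SimpleGraph V) [DecidableRel G'.Adj]
    (m m' : ℕ) (hm : m = G.edgeFinset.card) (hm' : m' = G'.edgeFinset.card)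
    (hm1 : 1 ≤ m) (hm'1 : 1 ≤ m')
    (R : U → V → Prop) [∀ u v, Decidable (R u v)]
    (dUb : U → ℕ) (hdUb : ∀ u, dUb u = (Finset.univ.filter (fun v => R u v)).card)
    (dVb : V → ℕ) (hdVb : ∀ v, dVb v = (Finset.univ.filter (fun u => R u v)).card)
    (hUdeg : ∀ u, 1 ≤ dUb u) (hVdeg : ∀ v, 1 ≤ dVb v)
    (α β : ℝ) (hα : 0 < α) (hβ : 0 < β)
    (wU πU : U → ℝ) (wV πV : V → ℝ)
    (h1 : ∀ u, wU u = α * ∑ v ∈ Finset.univ.filter (fun v => R u v), πV v / (dVb v : ℝ))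
    (h2 : ∀ v, wV v = β * ∑ u ∈ Finset.univ.filter (fun u => R u v), πU u / (dUb u : ℝ))
    (h3 : ∀ u, πU u = ((G.degree u : ℝ) + wU u) / (2 * (m : ℝ) + α))
    (h4 : ∀ v, πV v = ((G'.degree v : ℝ) + wV v) / (2 * (m' : ℝ) + β)) :
    (∑ u : U, wU u = α) ∧ (∑ v : V, wV v = β)
    ∧ (∑ u : U, πU u = 1) ∧ (∑ v : V, πV v = 1) := by
  have hdV0 : ∀ v : V, (dVb v : ℝ) ≠ 0 := fun v => by
    exact_mod_cast Nat.one_le_iff_ne_zero.mp (hVdeg v)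
  have hdU0 : ∀ u : U, (dUb u : ℝ) ≠ 0 := fun u => by
    exact_mod_cast Nat.one_le_iff_ne_zero.mp (hUdeg u)
  -- key double counting
  have key1 : ∑ u : U, wU u = α * ∑ v : V, πV v := by
    simp only [h1, ← Finset.mul_sum]
    congr 1
    simp only [Finset.sum_filter]
    rw [Finset.sum_comm]
    refine Finset.sum_congr rfl fun v _ => ?_
    rw [← Finset.sum_filter, Finset.sum_const, ← hdVb v, nsmul_eq_mul,
      mul_div_cancel₀ _ (hdV0 v)]
  have key2 : ∑ v : V, wV v = β * ∑ u : U, πU u := by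
    simp only [h2, ← Finset.mul_sum]
    congr 1
    simp only [Finset.sum_filter]
    rw [Finset.sum_comm]
    refine Finset.sum_congr rfl fun u _ => ?_
    rw [← Finset.sum_filter, Finset.sum_const, ← hdUb u, nsmul_eq_mul,
      mul_div_cancel₀ _ (hdU0 u)]
  have hdeg : ∑ u : U, (G.degree u : ℝ) = 2 * (m : ℝ) := by
    rw [hm, ← Nat.cast_sum, G.sum_degrees_eq_twice_card_edges]
    push_cast; ring
  have hdeg' : ∑ v : V, (G'.degree v : ℝ) = 2 * (m' : ℝ) := by
    rw [hm', ← Nat.cast_sum, G'.sum_degrees_eq_twice_card_edges]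
    push_cast; ring
  have hden : (0 : ℝ) < 2 * (m : ℝ) + α := by
    have : (1 : ℝ) ≤ (m : ℝ) := by exact_mod_cast hm1
    linarith
  have hden' : (0 : ℝ) < 2 * (m' : ℝ) + β := by
    have : (1 : ℝ) ≤ (m' : ℝ) := by exact_mod_cast hm'1
    linarith
  set S := ∑ u : U, πU u with hS
  set T := ∑ v : V, πV v with hT
  have e1 : S * (2 * (m : ℝ) + α) = 2 * (m : ℝ) + α * T := by
    have : S = ∑ u : U, ((G.degree u : ℝ) + wU u) / (2 * (m : ℝ) + α) := by
      rw [hS]; exact Finset.sum_congr rfl fun u _ => h3 u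
    rw [this, ← Finset.sum_div, Finset.sum_add_distrib, hdeg, key1,
      div_mul_cancel₀ _ (ne_of_gt hden)]
  have e2 : T * (2 * (m' : ℝ) + β) = 2 * (m' : ℝ) + β * S := by
    have : T = ∑ v : V, ((G'.degree v : ℝ) + wV v) / (2 * (m' : ℝ) + β) := by
      rw [hT]; exact Finset.sum_congr rfl fun v _ => h4 v
    rw [this, ← Finset.sum_div, Finset.sum_add_distrib, hdeg', key2,
      div_mul_cancel₀ _ (ne_of_gt hden')]
  have hm0 : (1 : ℝ) ≤ (m : ℝ) := by exact_mod_cast hm1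
  have hm'0 : (1 : ℝ) ≤ (m' : ℝ) := by exact_mod_cast hm'1
  have hmp : (0 : ℝ) < (m : ℝ) := lt_of_lt_of_le one_pos hm0
  have hmp' : (0 : ℝ) < (m' : ℝ) := lt_of_lt_of_le one_pos hm'0
  have hKpos : (0 : ℝ) < 4 * (m : ℝ) * (m' : ℝ) + 2 * (m : ℝ) * β + 2 * (m' : ℝ) * α := by
    positivity
  have hK : (S - 1) * (4 * (m : ℝ) * (m' : ℝ) + 2 * (m : ℝ) * β + 2 * (m' : ℝ) * α) = 0 := by
    linear_combination (2 * (m' : ℝ) + β) * e1 + α * e2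
  have hSone : S = 1 := by
    rcases mul_eq_zero.mp hK with h | h
    · linarith
    · exact absurd h (ne_of_gt hKpos)
  have hTone : T = 1 := by
    have := e2
    rw [hSone] at this
    have h2' : T * (2 * (m' : ℝ) + β) = 1 * (2 * (m' : ℝ) + β) := by linarith
    exact mul_right_cancel₀ (ne_of_gt hden') h2'
  refine ⟨?_, ?_, hSone, hTone⟩
  · rw [key1, hTone]; ring
  · rw [key2, hSone]; ring
end

section
/- (Reversibility of the RWT-RWA target-graph chain.) Let w : U → ℝ be a nonnegative weight function with W := ∑_{u∈U} w_u > 0 and d_u + w_u > 0 for every u ∈ U. Consider the Markov chain on the augmented state space U ∪ {j} (j a virtual jumper node not in U) with transitions: from u ∈ U, move to each G-neighbor u' of u with probability 1/(d_u + w_u) and to j with probability w_u/(d_u + w_u); from j, move to u ∈ U with probability w_u/W (the jump target distribution produced by the Metropolis–Hastings chain). Let Z = 2|E| + 2W and define π_u = (d_u + w_u)/Z for u ∈ U and π_j = W/Z. Then π is a probability distribution on U ∪ {j}, and the chain satisfies detailed balance with respect to π: π_x P(x,y) = π_y P(y,x) for all states x, y ∈ U ∪ {j}; hence the stationary probability of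 visiting u ∈ U is proportional to d_u + w_u. -/
open Finset

/-!
The augmented chain is the random walk on the graph `G` with a jumper node `j` attached
to every `u` by an edge of conductance `w u`, all edges of `G` having conductance `1`. A random
walk on a network with symmetric conductances `c` is reversible with respect to the total
conductance at each node: `π x P(x, y) = c(x, y) / Z` is symmetric in `x, y`. The total
conductance is `d u + w u` at `u ∈ U` and `W` at `j`, and summing over all nodes gives
`Z = 2|E| + 2W`.
-/

theorem detailed_balance_of_symmetric_flow {α : Type*} (pi : α → ℝ) (P c : α → α → ℝ)
    (hc : ∀ x y, c x y = c y x) (hflow : ∀ x y, x ≠ y → pi x * P x y = c x y) (x y : α) :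
    pi x * P x y = pi y * P y x := by
  obtain rfl | hxy := eq_or_ne x y
  · rfl
  · rw [hflow x y hxy, hflow y x hxy.symm, hc]

namespace SimpleGraph

variable {U : Type*} (G : SimpleGraph U) [DecidableRel G.Adj] (w : U → ℝ)

/-- Conductances of `G` augmented by the jumper node, encoded as `none`. -/
def jumperWeight : Option U → Option U → ℝ
  | some u, some v => if G.Adj u v then 1 else 0
  | some u, none => w u
  | none, some v => w v
  | none, none => 0

theorem jumperWeight_comm (x y : Option U) : G.jumperWeight w x y = G.jumperWeight w y x := by
  cases x <;> cases y <;> simp [jumperWeight, G.adj_comm]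

variable [Fintype U]

theorem sum_jumperWeight_some (u : U) :
    ∑ y, G.jumperWeight w (some u) y = G.degree u + w u := by
  simp [Fintype.sum_option, jumperWeight, ← card_neighborFinset_eq_degree,
    neighborFinset_eq_filter, add_comm]

theorem sum_jumperWeight_none : ∑ y, G.jumperWeight w none y = ∑ u, w u := by
  simp [Fintype.sum_option, SimpleGraph.jumperWeight]

theorem sum_sum_jumperWeight :
    ∑ x, ∑ y, G.jumperWeight w x y = 2 * (#G.edgeFinset : ℝ) + 2 * ∑ u, w u := by
  rw [Fintype.sum_option, G.sum_jumperWeight_none w]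
  simp only [G.sum_jumperWeight_some w, sum_add_distrib]
  rw [← Nat.cast_sum, sum_degrees_eq_twice_card_edges]
  push_cast
  ring

end SimpleGraph

theorem rwtrwa_target_chain_reversible_general
    {U : Type*} [Fintype U]
    (G : SimpleGraph U) [DecidableRel G.Adj]
    (w : U → ℝ)
    (W : ℝ) (hW : W = ∑ u : U, w u) (hWpos : 0 < W)
    (hdw : ∀ u, 0 < (G.degree u : ℝ) + w u)
    (P : Option U → Option U → ℝ)
    (hP1 : ∀ u u' : U, P (some u) (some u') =
      if G.Adj u u' then 1 / ((G.degree u : ℝ) + w u) else 0)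
    (hP2 : ∀ u : U, P (some u) none = w u / ((G.degree u : ℝ) + w u))
    (hP3 : ∀ u : U, P none (some u) = w u / W)
    (Z : ℝ) (hZ : Z = 2 * (G.edgeFinset.card : ℝ) + 2 * W)
    (pi : Option U → ℝ)
    (hpi1 : ∀ u : U, pi (some u) = ((G.degree u : ℝ) + w u) / Z)
    (hpi2 : pi none = W / Z) :
    (∑ x : Option U, pi x) = 1
    ∧ (∀ x y : Option U, pi x * P x y = pi y * P y x) := by
  have hZpos : 0 < Z := by rw [hZ]; positivity
  have hpi : ∀ x, pi x = (∑ y, G.jumperWeight w x y) / Z := by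
    rintro (_ | u)
    · rw [hpi2, G.sum_jumperWeight_none w, hW]
    · rw [hpi1, G.sum_jumperWeight_some w]
  have hP : ∀ x y, x ≠ y → P x y = G.jumperWeight w x y / ∑ y, G.jumperWeight w x y := by
    rintro (_ | u) (_ | v) hxy
    · exact absurd rfl hxy
    · rw [hP3, G.sum_jumperWeight_none w, ← hW]; rfl
    · rw [hP2, G.sum_jumperWeight_some w]; rfl
    · rw [hP1, G.sum_jumperWeight_some w, SimpleGraph.jumperWeight]
      split_ifs <;> simp
  have hsum_ne : ∀ x, ∑ y, G.jumperWeight w x y ≠ 0 := by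
    rintro (_ | u)
    · rw [G.sum_jumperWeight_none w, ← hW]; exact hWpos.ne'
    · rw [G.sum_jumperWeight_some w]; exact (hdw u).ne'
  refine ⟨?_, detailed_balance_of_symmetric_flow pi P (fun x y ↦ G.jumperWeight w x y / Z)
    (fun x y ↦ by rw [G.jumperWeight_comm w]) fun x y hxy ↦ ?_⟩
  · simp only [hpi, ← sum_div]
    rw [G.sum_sum_jumperWeight w, ← hW, ← hZ, div_self hZpos.ne']
  · rw [hpi, hP x y hxy, div_mul_div_cancel₀' (hsum_ne x)]

/-- Reversibility of the RWT-RWA target-graph chain: with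
nonnegative weights `w`, `W = ∑ w > 0`, and jump target distribution `w u / W`
(produced by the Metropolis–Hastings chain), the augmented chain on `U ∪ {j}`
(encoded as `Option U`, with the jumper node `j` encoded by `none`) satisfies
detailed balance with respect to `π u = (d u + w u)/Z`, `π j = W/Z`,
`Z = 2|E| + 2W`, and `π` sums to 1; hence the stationary probability of
visiting `u ∈ U` is proportional to `d u + w u`. -/
theorem rwtrwa_target_chain_reversible
    {U : Type*} [Fintype U] [DecidableEq U]
    (G : SimpleGraph U) [DecidableRel G.Adj]
    (w : U → ℝ) (hwnn : ∀ u, 0 ≤ w u)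
    (W : ℝ) (hW : W = ∑ u : U, w u) (hWpos : 0 < W)
    (hdw : ∀ u, 0 < (G.degree u : ℝ) + w u)
    (P : Option U → Option U → ℝ)
    (hP1 : ∀ u u' : U, P (some u) (some u') =
      if G.Adj u u' then 1 / ((G.degree u : ℝ) + w u) else 0)
    (hP2 : ∀ u : U, P (some u) none = w u / ((G.degree u : ℝ) + w u))
    (hP3 : ∀ u : U, P none (some u) = w u / W)
    (hP4 : P none none = 0)
    (Z : ℝ) (hZ : Z = 2 * (G.edgeFinset.card : ℝ) + 2 * W)
    (pi : Option U → ℝ)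
    (hpi1 : ∀ u : U, pi (some u) = ((G.degree u : ℝ) + w u) / Z)
    (hpi2 : pi none = W / Z) :
    (∑ x : Option U, pi x) = 1
    ∧ (∀ x y : Option U, pi x * P x y = pi y * P y x) :=
  rwtrwa_target_chain_reversible_general G w W hW hWpos hdw P hP1 hP2 hP3 Z hZ pi hpi1 hpi2
end
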